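/- arXiv:2005.01046 — 3 statements merged into one kernel-verified Lean document; each statement's English description precedes it below -/
import Mathlib

section
/- Let m ≥ 2 and p ≥ 2 be integers and let θ₁, …, θ_{m−1} > 0 be real numbers. Define H : ℝᵐ → ℝ by H(u) = Σ_{0 ≤ p₁ ≤ p₂ ≤ ⋯ ≤ p_{m−1} ≤ p} C(p, p_{m−1}) C(p_{m−1}, p_{m−2}) ⋯ C(p₂, p₁) · θ₁^{p₁²} θ₂^{p₂²} ⋯ θ_{m−1}^{p_{m−1}²} · u₁^{p₁} u₂^{p₂−p₁} ⋯ u_{m−1}^{p_{m−1}−p_{m−2}} u_m^{p−p_{m−1}}, where C(a,b) denotes the binomial coefficient a!/(b!(a−b)!) and the sum ranges over all integer tuples (p₁,…,p_{m−1}) with 0 ≤ p₁ ≤ p₂ ≤ ⋯ ≤ p_{m−1} ≤ p. Then for every i ∈ {1, …, m} and every u ∈ ℝᵐ, the partial derivative of H with respect to u_i satisfies ∂H/∂u_i (u) = p · Σ_{0 ≤ p₁ ≤ ⋯ ≤ p_{m−1} ≤ p−1} C(p−1, p_{m−1}) ⋯ C(p₂, p₁) · (Π_{k=1}^{i−1}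 θ_k^{p_k²}) · (Π_{k=i}^{m−1} θ_k^{(p_k+1)²}) · u₁^{p₁} u₂^{p₂−p₁} ⋯ u_{m−1}^{p_{m−1}−p_{m−2}} u_m^{(p−1)−p_{m−1}}. -/
/-!
Write the tuple `0 ≤ p₁ ≤ ⋯ ≤ p_{m-1} ≤ p` as the chain `0, p₁, …, p_{m-1}, p`. The monomial of
`H` attached to it has as exponents the gaps `eₖ` of the chain, and its coefficient is the
multinomial coefficient `p! / ∏ eₖ!` (a telescoping product of binomial coefficients). Hence
`∂ᵢ` sends the monomial with gaps `e` to `eᵢ · p! / ∏ eₖ! = p · (p-1)! / ∏ e'ₖ!` times the monomial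
with gaps `e' = e - δᵢ`. Lowering the `i`-th gap by one is the same as lowering `p_k` by one for
every `k ≥ i`, which turns `θ_k^{p_k²}` into `θ_k^{(p'_k+1)²}` exactly for `k ≥ i`; the terms with
`eᵢ = 0` vanish, and the remaining ones are in bijection with the chains ending at `p - 1`.
-/

open scoped Nat

section Monomial

variable {𝕜 ι : Type*} [NontriviallyNormedField 𝕜] [Fintype ι] [DecidableEq ι]

theorem fderiv_prod_pow_apply_single (e : ι → ℕ) (u : ι → 𝕜) (i : ι) :
    fderiv 𝕜 (fun v : ι → 𝕜 => ∏ k, v k ^ e k) u (Pi.single i 1) =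
      e i * ∏ k, u k ^ Function.update e i (e i - 1) k := by
  have hderiv : HasFDerivAt (fun v : ι → 𝕜 => ∏ k, v k ^ e k)
      (∑ k, (∏ l ∈ Finset.univ.erase k, u l ^ e l) •
        ((e k * u k ^ (e k - 1)) • (ContinuousLinearMap.proj k : (ι → 𝕜) →L[𝕜] 𝕜))) u :=
    HasFDerivAt.finsetProd fun k _ =>
      (hasDerivAt_pow (e k) (u k)).comp_hasFDerivAt u (hasFDerivAt_apply k u)
  rw [hderiv.fderiv, sum_apply,
    Finset.sum_eq_single i (fun k _ hk => by simp [hk]) (by simp),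
    ← Finset.mul_prod_erase Finset.univ _ (Finset.mem_univ i)]
  simp only [smul_apply, ContinuousLinearMap.proj_apply, Pi.single_eq_same, smul_eq_mul,
    mul_one, Function.update_self]
  rw [Finset.prod_congr rfl fun k hk =>
    congrArg (u k ^ ·) (Function.update_of_ne (Finset.ne_of_mem_erase hk) ..)]
  ring

theorem fderiv_sum_mul_prod_pow_apply_single {σ : Type*} (S : Finset σ) (c : σ → 𝕜)
    (e : σ → ι → ℕ) (u : ι → 𝕜) (i : ι) :
    fderiv 𝕜 (fun v : ι → 𝕜 => ∑ s ∈ S, c s * ∏ k, v k ^ e s k) u (Pi.single i 1) =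
      ∑ s ∈ S, c s * (e s i * ∏ k, u k ^ Function.update (e s) i (e s i - 1) k) := by
  rw [fderiv_fun_sum fun s _ => by fun_prop, sum_apply]
  refine Finset.sum_congr rfl fun s _ => ?_
  rw [fderiv_const_mul (by fun_prop), smul_apply, smul_eq_mul, fderiv_prod_pow_apply_single]

end Monomial

section Chains

def gaps {n : ℕ} (σ : Fin (n + 1) → ℕ) (k : Fin n) : ℕ := σ k.succ - σ k.castSucc

def chainChoose {n : ℕ} (σ : Fin (n + 1) → ℕ) : ℕ :=
  ∏ k : Fin n, (σ k.succ).choose (σ k.castSucc)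

theorem factorial_mul_chainChoose_mul_prod_factorial_gaps {n : ℕ} {σ : Fin (n + 1) → ℕ}
    (hσ : Monotone σ) :
    (σ 0)! * chainChoose σ * ∏ k, (gaps σ k)! = (σ (Fin.last n))! := by
  induction n with
  | zero => simp [chainChoose]
  | succ n ih =>
    have hstep := Nat.choose_mul_factorial_mul_factorial (hσ (Fin.castSucc_le_succ (Fin.last n)))
    have hinit := ih (hσ.comp Fin.strictMono_castSucc.monotone)
    simp only [chainChoose, gaps, Function.comp_apply, Fin.castSucc_zero] at hinit
    rw [chainChoose, Fin.prod_univ_castSucc, Fin.prod_univ_castSucc, ← Fin.succ_last, ← hstep,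
      ← hinit]
    simp only [gaps, Fin.succ_castSucc]
    ring

theorem prod_factorial_update_succ {ι : Type*} [Fintype ι] [DecidableEq ι] (e : ι → ℕ) (i : ι) :
    ∏ k, (Function.update e i (e i + 1) k)! = (e i + 1) * ∏ k, (e k)! := by
  rw [← Finset.mul_prod_erase _ _ (Finset.mem_univ i),
    ← Finset.mul_prod_erase _ (fun k => (e k)!) (Finset.mem_univ i),
    Finset.prod_congr rfl fun k hk =>
      congrArg (·!) (Function.update_of_ne (Finset.ne_of_mem_erase hk) ..),
    Function.update_self, Nat.factorial_succ, mul_assoc]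

theorem gaps_add_ite_lt {m : ℕ} {σ : Fin (m + 1) → ℕ} (hσ : Monotone σ) (i : Fin m) :
    gaps (fun k => σ k + if (i : ℕ) < k then 1 else 0) =
      Function.update (gaps σ) i (gaps σ i + 1) := by
  funext k
  have := hσ k.castSucc_le_succ
  rcases eq_or_ne k i with rfl | hki
  · simp [gaps]
    omega
  · have : (k : ℕ) ≠ i := Fin.val_ne_of_ne hki
    simp only [gaps, Function.update_of_ne hki, Fin.val_succ, Fin.val_castSucc]
    split_ifs <;> omega

theorem Monotone.snoc {α : Type*} [Preorder α] {n : ℕ} {s : Fin n → α} (hs : Monotone s) {a : α}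
    (ha : ∀ k, s k ≤ a) : Monotone (Fin.snoc s a : Fin (n + 1) → α) := by
  intro k l hkl
  induction l using Fin.lastCases with
  | last => induction k using Fin.lastCases <;> simp [ha]
  | cast l =>
    induction k using Fin.lastCases with
    | last => exact absurd hkl (not_le.2 (Fin.castSucc_lt_last l))
    | cast k => simpa using hs (by simpa using hkl)

def chain {n : ℕ} (P : ℕ) (s : Fin n → ℕ) : Fin (n + 2) → ℕ :=
  Fin.cons 0 (Fin.snoc s P)

variable {n P : ℕ}

@[simp] theorem chain_zero (s : Fin n → ℕ) : chain P s 0 = 0 := rfl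

@[simp] theorem chain_castSucc_succ (s : Fin n → ℕ) (k : Fin n) :
    chain P s k.castSucc.succ = s k := by
  simp [chain]

@[simp] theorem chain_last (s : Fin n → ℕ) : chain P s (Fin.last (n + 1)) = P := by
  simp [chain, ← Fin.succ_last]

@[simp] theorem chain_one (s : Fin (n + 1) → ℕ) : chain P s 1 = s 0 :=
  chain_castSucc_succ s 0

@[simp] theorem chain_castSucc_succ_succ (s : Fin (n + 1) → ℕ) (k : Fin n) :
    chain P s k.castSucc.succ.succ = s k.succ := by
  rw [← Fin.castSucc_succ, chain_castSucc_succ]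

theorem chain_castSucc_last (s : Fin (n + 1) → ℕ) :
    chain P s (Fin.last (n + 1)).castSucc = s (Fin.last n) :=
  chain_castSucc_succ s (Fin.last n)

theorem chain_monotone {s : Fin n → ℕ} (hs : Monotone s) (hP : ∀ k, s k ≤ P) :
    Monotone (chain P s) :=
  (hs.snoc hP).vecCons (Nat.zero_le _)

theorem chain_val_monotone {p : ℕ} {s : Fin n → Fin (p + 1)} (hs : Monotone s) :
    Monotone (chain p fun k => (s k : ℕ)) :=
  chain_monotone (fun _ _ h => hs h) fun k => by omega

theorem chain_val_monotone_pred {p : ℕ} {s : Fin n → Fin p} (hs : Monotone s) :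
    Monotone (chain (p - 1) fun k => (s k : ℕ)) :=
  chain_monotone (fun _ _ h => hs h) fun k => by omega

theorem prod_pow_gaps_chain {M : Type*} [CommMonoid M] (s : Fin (n + 1) → ℕ)
    (u : Fin (n + 2) → M) :
    u 0 ^ s 0 * (∏ i : Fin n, u i.succ.castSucc ^ (s i.succ - s i.castSucc)) *
        u (Fin.last (n + 1)) ^ (P - s (Fin.last n)) =
      ∏ k, u k ^ gaps (chain P s) k := by
  rw [Fin.prod_univ_succ, Fin.prod_univ_castSucc]
  simp [gaps, chain_castSucc_last, mul_assoc]

theorem cast_choose_mul_prod_choose_eq_chainChoose {R : Type*} [CommSemiring R]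
    (s : Fin (n + 1) → ℕ) :
    (P.choose (s (Fin.last n)) : R) * ∏ i : Fin n, ((s i.succ).choose (s i.castSucc) : R) =
      chainChoose (chain P s) := by
  rw [chainChoose, Nat.cast_prod, Fin.prod_univ_succ, Fin.prod_univ_castSucc]
  simp [chain_castSucc_last, mul_comm]

end Chains

section Shift

variable {n p : ℕ}

def shiftAt (i : ℕ) (s : Fin n → Fin p) (k : Fin n) : Fin (p + 1) :=
  if (k : ℕ) < i then (s k).castSucc else (s k).succ

theorem val_shiftAt (i : ℕ) (s : Fin n → Fin p) (k : Fin n) :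
    (shiftAt i s k : ℕ) = if (k : ℕ) < i then (s k : ℕ) else s k + 1 := by
  unfold shiftAt
  split_ifs <;> rfl

theorem shiftAt_injective (i : ℕ) : Function.Injective (shiftAt (n := n) (p := p) i) := by
  intro s t h
  funext k
  have := congrArg Fin.val (congrFun h k)
  simp only [val_shiftAt] at this
  ext
  split_ifs at this <;> omega

theorem Monotone.shiftAt {s : Fin n → Fin p} (hs : Monotone s) (i : ℕ) :
    Monotone (shiftAt i s) := by
  intro a b hab
  have := hs hab
  rw [Fin.le_iff_val_le_val] at this hab ⊢
  simp only [val_shiftAt]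
  split_ifs <;> omega

theorem chain_shiftAt (hp : 0 < p) (i : Fin (n + 1)) (s : Fin n → Fin p) (k : Fin (n + 2)) :
    chain p (fun l => (shiftAt i s l : ℕ)) k =
      chain (p - 1) (fun l => (s l : ℕ)) k + if (i : ℕ) < k then 1 else 0 := by
  induction k using Fin.cases with
  | zero => simp
  | succ k =>
    induction k using Fin.lastCases with
    | last =>
      simp [Nat.lt_succ_iff.mp i.isLt]
      omega
    | cast k =>
      simp [val_shiftAt]
      split_ifs <;> omega

theorem gaps_chain_shiftAt (hp : 0 < p) (i : Fin (n + 1)) {s : Fin n → Fin p}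
    (hs : Monotone s) :
    gaps (chain p fun k => (shiftAt i s k : ℕ)) =
      Function.update (gaps (chain (p - 1) fun k => (s k : ℕ))) i
        (gaps (chain (p - 1) fun k => (s k : ℕ)) i + 1) := by
  rw [funext (chain_shiftAt hp i s)]
  exact gaps_add_ite_lt (chain_val_monotone_pred hs) i

theorem gaps_mul_chainChoose_chain_shiftAt (hp : 0 < p) (i : Fin (n + 1)) {s : Fin n → Fin p}
    (hs : Monotone s) :
    gaps (chain p fun k => (shiftAt i s k : ℕ)) i *
        chainChoose (chain p fun k => (shiftAt i s k : ℕ)) =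
      p * chainChoose (chain (p - 1) fun k => (s k : ℕ)) := by
  have hmul := factorial_mul_chainChoose_mul_prod_factorial_gaps (chain_val_monotone (hs.shiftAt i))
  have hmul' := factorial_mul_chainChoose_mul_prod_factorial_gaps (chain_val_monotone_pred hs)
  rw [gaps_chain_shiftAt hp i hs, prod_factorial_update_succ] at hmul
  simp only [chain_zero, chain_last, Nat.factorial_zero, one_mul] at hmul hmul'
  rw [gaps_chain_shiftAt hp i hs, Function.update_self]
  have hpos : 0 < ∏ k, (gaps (chain (p - 1) fun l => (s l : ℕ)) k)! :=
    Finset.prod_pos fun k _ => Nat.factorial_pos _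
  refine Nat.eq_of_mul_eq_mul_right hpos ?_
  calc _ = _ := by ring
    _ = p ! := hmul
    _ = p * (p - 1)! := (Nat.mul_factorial_pred hp.ne').symm
    _ = _ := by rw [← hmul', mul_assoc]

theorem exists_monotone_shiftAt_eq (i : Fin (n + 1)) {s : Fin n → Fin (p + 1)}
    (hs : Monotone s) (hgap : gaps (chain p fun k => (s k : ℕ)) i ≠ 0) :
    ∃ s' : Fin n → Fin p, Monotone s' ∧ shiftAt i s' = s := by
  have hσ := chain_val_monotone hs
  have hjump : chain p (fun k => (s k : ℕ)) i.castSucc < chain p (fun k => (s k : ℕ)) i.succ := by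
    unfold gaps at hgap
    omega
  have hbelow (k : Fin n) (hk : (k : ℕ) < i) :
      (s k : ℕ) ≤ chain p (fun k => (s k : ℕ)) i.castSucc := by
    simpa using hσ (show k.castSucc.succ ≤ i.castSucc by rw [Fin.le_iff_val_le_val]; simp; omega)
  have habove (k : Fin n) (hk : (i : ℕ) ≤ k) : chain p (fun k => (s k : ℕ)) i.succ ≤ s k := by
    simpa using hσ (show i.succ ≤ k.castSucc.succ by rw [Fin.le_iff_val_le_val]; simp; omega)
  refine ⟨fun k => ⟨if (k : ℕ) < i then s k else s k - 1, ?_⟩, fun a b hab => ?_, ?_⟩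
  · have := (s k).isLt
    have htop : chain p (fun k => (s k : ℕ)) i.succ ≤ p := by simpa using hσ (Fin.le_last i.succ)
    split_ifs with hk
    · have := hbelow k hk
      omega
    · omega
  · have hsab := hs hab
    rw [Fin.le_iff_val_le_val] at hab hsab ⊢
    dsimp only
    split_ifs with ha hb hb
    · exact hsab
    · have := hbelow a ha
      have := habove b (by omega)
      omega
    · omega
    · omega
  · funext k
    ext
    rw [val_shiftAt]
    dsimp only
    split_ifs with hk
    · rfl
    · have := habove k (by omega)
      omega

end Shift

theorem fderiv_sum_mul_prod_pow_gaps_chain_apply_single {𝕜 : Type*} [NontriviallyNormedField 𝕜]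
    {n p : ℕ} [NeZero n] (c : (Fin n → Fin (p + 1)) → 𝕜) (i : Fin (n + 1)) (u : Fin (n + 1) → 𝕜) :
    fderiv 𝕜 (fun v => ∑ s ∈ Finset.univ.filter
        (fun s : Fin n → Fin (p + 1) => ∀ a b : Fin n, a ≤ b → s a ≤ s b),
        c s * ∏ k, v k ^ gaps (chain p fun l => (s l : ℕ)) k) u (Pi.single i 1) =
      ∑ s ∈ Finset.univ.filter (fun s : Fin n → Fin p => ∀ a b : Fin n, a ≤ b → s a ≤ s b),
        c (shiftAt i s) * gaps (chain p fun l => (shiftAt i s l : ℕ)) i *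
          ∏ k, u k ^ gaps (chain (p - 1) fun l => (s l : ℕ)) k := by
  rw [fderiv_sum_mul_prod_pow_apply_single]
  symm
  refine Finset.sum_of_injOn (shiftAt i) (shiftAt_injective i).injOn ?_ ?_ ?_
  · intro s hs
    simp only [Finset.coe_filter, Finset.mem_univ, true_and, Set.mem_ofPred_eq] at hs ⊢
    exact fun a b hab => Monotone.shiftAt (fun _ _ h => hs _ _ h) i hab
  · intro s hs hnot
    simp only [Finset.mem_filter, Finset.mem_univ, true_and] at hs
    have hgap : gaps (chain p fun l => (s l : ℕ)) i = 0 := by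
      by_contra hgap
      obtain ⟨s', hs', rfl⟩ := exists_monotone_shiftAt_eq i (s := s) (fun _ _ h => hs _ _ h) hgap
      exact hnot ⟨s', by simpa using fun a b h => hs' h, rfl⟩
    simp [hgap]
  · intro s hs
    simp only [Finset.mem_filter, Finset.mem_univ, true_and] at hs
    have hp : 0 < p := (s 0).pos
    rw [gaps_chain_shiftAt hp i fun _ _ h => hs _ _ h]
    simp [mul_assoc]

theorem stmt_1_general (j p : ℕ) (θ : Fin (j + 1) → ℝ)
    (H : (Fin (j + 2) → ℝ) → ℝ)
    (hH : ∀ u : Fin (j + 2) → ℝ,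
      H u = ∑ s ∈ Finset.univ.filter
          (fun s : Fin (j + 1) → Fin (p + 1) => ∀ a b : Fin (j + 1), a ≤ b → s a ≤ s b),
        ((p.choose (s (Fin.last j)) : ℝ) *
            ∏ i : Fin j, ((s i.succ : ℕ).choose (s i.castSucc) : ℝ)) *
          (∏ k : Fin (j + 1), θ k ^ ((s k : ℕ) ^ 2)) *
          ((u 0 ^ (s 0 : ℕ)) *
            (∏ i : Fin j, u i.succ.castSucc ^ ((s i.succ : ℕ) - (s i.castSucc : ℕ))) *
            u (Fin.last (j + 1)) ^ (p - (s (Fin.last j) : ℕ)))) :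
    ∀ (i : Fin (j + 2)) (u : Fin (j + 2) → ℝ),
      fderiv ℝ H u (Pi.single i 1) =
        (p : ℝ) * ∑ s ∈ Finset.univ.filter
            (fun s : Fin (j + 1) → Fin p => ∀ a b : Fin (j + 1), a ≤ b → s a ≤ s b),
          (((p - 1).choose (s (Fin.last j)) : ℝ) *
              ∏ i' : Fin j, ((s i'.succ : ℕ).choose (s i'.castSucc) : ℝ)) *
            (∏ k : Fin (j + 1),
              θ k ^ (if (k : ℕ) < (i : ℕ) then (s k : ℕ) ^ 2 else ((s k : ℕ) + 1) ^ 2)) *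
            ((u 0 ^ (s 0 : ℕ)) *
              (∏ i' : Fin j, u i'.succ.castSucc ^ ((s i'.succ : ℕ) - (s i'.castSucc : ℕ))) *
              u (Fin.last (j + 1)) ^ ((p - 1) - (s (Fin.last j) : ℕ))) := by
  intro i u
  have hH' : H = fun v => ∑ s ∈ Finset.univ.filter
      (fun s : Fin (j + 1) → Fin (p + 1) => ∀ a b : Fin (j + 1), a ≤ b → s a ≤ s b),
        ((chainChoose (chain p fun l => (s l : ℕ)) : ℝ) * ∏ k, θ k ^ ((s k : ℕ) ^ 2)) *
          ∏ k, v k ^ gaps (chain p fun l => (s l : ℕ)) k := by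
    funext v
    rw [hH v]
    exact Finset.sum_congr rfl fun s _ => by
      rw [prod_pow_gaps_chain (fun k => (s k : ℕ)),
        cast_choose_mul_prod_choose_eq_chainChoose (fun k => (s k : ℕ))]
  rw [hH', fderiv_sum_mul_prod_pow_gaps_chain_apply_single, Finset.mul_sum]
  refine Finset.sum_congr rfl fun s hs => ?_
  have hmono : Monotone s := fun _ _ h => (Finset.mem_filter.mp hs).2 _ _ h
  have hcoef := congrArg (Nat.cast : ℕ → ℝ) (gaps_mul_chainChoose_chain_shiftAt (s 0).pos i hmono)
  have hθ : ∏ k, θ k ^ ((shiftAt i s k : ℕ) ^ 2) =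
      ∏ k, θ k ^ (if (k : ℕ) < (i : ℕ) then (s k : ℕ) ^ 2 else ((s k : ℕ) + 1) ^ 2) :=
    Finset.prod_congr rfl fun k _ => by rw [val_shiftAt]; split_ifs <;> rfl
  rw [prod_pow_gaps_chain (fun k => (s k : ℕ)),
    cast_choose_mul_prod_choose_eq_chainChoose (fun k => (s k : ℕ)), ← hθ]
  push_cast at hcoef
  simp only [← mul_assoc] at hcoef ⊢
  rw [← hcoef]
  ring

/-- Lemma 5.1 of the paper: the partial derivatives of the homogeneous polynomial
`H` of degree `p` in `m = j + 2` variables.  The tuples `(p₁, …, p_{m-1})` with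
`0 ≤ p₁ ≤ ⋯ ≤ p_{m-1} ≤ p` are encoded as monotone functions `s : Fin (j+1) → Fin (p+1)`. -/
theorem stmt_1 (j p : ℕ) (hp : 2 ≤ p) (θ : Fin (j + 1) → ℝ) (hθ : ∀ k, 0 < θ k)
    (H : (Fin (j + 2) → ℝ) → ℝ)
    (hH : ∀ u : Fin (j + 2) → ℝ,
      H u = ∑ s ∈ Finset.univ.filter
          (fun s : Fin (j + 1) → Fin (p + 1) => ∀ a b : Fin (j + 1), a ≤ b → s a ≤ s b),
        ((p.choose (s (Fin.last j)) : ℝ) *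
            ∏ i : Fin j, ((s i.succ : ℕ).choose (s i.castSucc) : ℝ)) *
          (∏ k : Fin (j + 1), θ k ^ ((s k : ℕ) ^ 2)) *
          ((u 0 ^ (s 0 : ℕ)) *
            (∏ i : Fin j, u i.succ.castSucc ^ ((s i.succ : ℕ) - (s i.castSucc : ℕ))) *
            u (Fin.last (j + 1)) ^ (p - (s (Fin.last j) : ℕ)))) :
    ∀ (i : Fin (j + 2)) (u : Fin (j + 2) → ℝ),
      fderiv ℝ H u (Pi.single i 1) =
        (p : ℝ) * ∑ s ∈ Finset.univ.filter
            (fun s : Fin (j + 1) → Fin p => ∀ a b : Fin (j + 1), a ≤ b → s a ≤ s b),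
          (((p - 1).choose (s (Fin.last j)) : ℝ) *
              ∏ i' : Fin j, ((s i'.succ : ℕ).choose (s i'.castSucc) : ℝ)) *
            (∏ k : Fin (j + 1),
              θ k ^ (if (k : ℕ) < (i : ℕ) then (s k : ℕ) ^ 2 else ((s k : ℕ) + 1) ^ 2)) *
            ((u 0 ^ (s 0 : ℕ)) *
              (∏ i' : Fin j, u i'.succ.castSucc ^ ((s i'.succ : ℕ) - (s i'.castSucc : ℕ))) *
              u (Fin.last (j + 1)) ^ ((p - 1) - (s (Fin.last j) : ℕ))) :=
  stmt_1_general j p θ H hH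
end

section
/- Define F : ℝ³ → ℝ³ by F(u) = (u₁ − u₁u₂u₃, u₁u₂u₃ − u₂, u₁u₂u₃ − u₃). Then for every K > 0 there exist real numbers a₁, a₂ ≥ K such that for every L ≥ 0 there exists u ∈ ℝ³₊ with a₁ F₁(u) + a₂ F₂(u) + F₃(u) > L (u₁ + u₂ + u₃ + 1). Consequently there is no K > 0 such that for every a₁, a₂ ≥ K one can find L_a ≥ 0 with a₁F₁(u) + a₂F₂(u) + F₃(u) ≤ L_a(u₁+u₂+u₃+1) for all u ∈ ℝ³₊. -/
/-! With `a₁ = a₂ = a` the combination `a₁F₁ + a₂F₂ + F₃` restricted to the diagonal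
`u = (t, t, t)` is `t³ - t`, independently of `a`: the linear terms of `F₁` and `F₂` cancel
and the cubic term survives. A cubic outgrows every affine bound `L (3t + 1)`. -/

lemma combination_diagonal (a t : ℝ) :
    a * (t - t * t * t) + a * (t * t * t - t) + (t * t * t - t) = t ^ 3 - t := by
  ring

lemma exists_nonneg_affine_lt_cube_sub_self (L : ℝ) :
    ∃ t : ℝ, 0 ≤ t ∧ L * (t + t + t + 1) < t ^ 3 - t := by
  refine ⟨|L| + 2, by positivity, ?_⟩
  have hL : L ≤ |L| := le_abs_self L
  have hL₀ : 0 ≤ |L| := abs_nonneg L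
  nlinarith [mul_le_mul_of_nonneg_right hL (by positivity : (0 : ℝ) ≤ 3 * (|L| + 2) + 1),
    sq_nonneg (|L| + 1), mul_nonneg hL₀ (sq_nonneg |L|)]

lemma exists_nonneg_affine_lt_combination (a L : ℝ) :
    ∃ u₁ u₂ u₃ : ℝ, 0 ≤ u₁ ∧ 0 ≤ u₂ ∧ 0 ≤ u₃ ∧
      L * (u₁ + u₂ + u₃ + 1) <
        a * (u₁ - u₁ * u₂ * u₃) + a * (u₁ * u₂ * u₃ - u₂) + (u₁ * u₂ * u₃ - u₃) := by
  obtain ⟨t, ht, hlt⟩ := exists_nonneg_affine_lt_cube_sub_self L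
  exact ⟨t, t, t, ht, ht, ht, (combination_diagonal a t).symm ▸ hlt⟩

/-- The vector field (1.5) of the paper does not satisfy condition (1.4):
for every `K > 0` there are `a₁, a₂ ≥ K` for which no linear bound
`a₁F₁ + a₂F₂ + F₃ ≤ L(u₁+u₂+u₃+1)` holds on `ℝ³₊`. -/
theorem stmt_8 :
    (∀ K : ℝ, 0 < K → ∃ a₁ a₂ : ℝ, K ≤ a₁ ∧ K ≤ a₂ ∧
      ∀ L : ℝ, 0 ≤ L → ∃ u₁ u₂ u₃ : ℝ, 0 ≤ u₁ ∧ 0 ≤ u₂ ∧ 0 ≤ u₃ ∧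
        L * (u₁ + u₂ + u₃ + 1) <
          a₁ * (u₁ - u₁ * u₂ * u₃) + a₂ * (u₁ * u₂ * u₃ - u₂) +
            (u₁ * u₂ * u₃ - u₃)) ∧
    ¬ ∃ K : ℝ, 0 < K ∧ ∀ a₁ a₂ : ℝ, K ≤ a₁ → K ≤ a₂ →
        ∃ L : ℝ, 0 ≤ L ∧ ∀ u₁ u₂ u₃ : ℝ, 0 ≤ u₁ → 0 ≤ u₂ → 0 ≤ u₃ →
          a₁ * (u₁ - u₁ * u₂ * u₃) + a₂ * (u₁ * u₂ * u₃ - u₂) +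
              (u₁ * u₂ * u₃ - u₃) ≤ L * (u₁ + u₂ + u₃ + 1) := by
  refine ⟨fun K _ => ⟨K, K, le_rfl, le_rfl,
    fun L _ => exists_nonneg_affine_lt_combination K L⟩, ?_⟩
  rintro ⟨K, -, bounded⟩
  obtain ⟨L, -, hbound⟩ := bounded K K le_rfl le_rfl
  obtain ⟨u₁, u₂, u₃, h₁, h₂, h₃, hlt⟩ := exists_nonneg_affine_lt_combination K L
  exact (hbound u₁ u₂ u₃ h₁ h₂ h₃).not_gt hlt
end

section
/- There exists a map F : ℝ³ → ℝ³ (namely F(u) = (u₁ − u₁u₂u₃, u₁u₂u₃ − u₂, u₁u₂u₃ − u₃)) with the following two properties: (i) there exist b₁, b₂, b₃ > 0 and L₁ ≥ 0 (one may take b = (2,1,1) and L₁ = 2) such that b₁F₁(u) + b₂F₂(u) + b₃F₃(u) ≤ L₁(u₁+u₂+u₃+1) for all u ∈ ℝ³₊; and (ii) there is no K > 0 such that for all a₁, a₂ ≥ K there exists L_a ≥ 0 with a₁F₁(u) + a₂F₂(u) + F₃(u) ≤ L_a(u₁+u₂+u₃+1) for all u ∈ ℝ³₊. -/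
/-!
With weights `b = (2, 1, 1)` the cubic terms of `F` cancel, leaving the linear expression
`2 u₀ - u₁ - u₂`. With weights `(a, a, 1)`, however, along the diagonal `u = (t, t, t)` the
combination equals `t³ - t`, which no linear function of `t` dominates; so (V_L) fails for every
`K`, already at `a₁ = a₂ = K`.
-/

def cubicField (u : Fin 3 → ℝ) : Fin 3 → ℝ :=
  ![u 0 - u 0 * u 1 * u 2, u 0 * u 1 * u 2 - u 1, u 0 * u 1 * u 2 - u 2]

namespace cubicField

lemma weighted_sum_eq (u : Fin 3 → ℝ) :
    2 * cubicField u 0 + cubicField u 1 + cubicField u 2 = 2 * u 0 - u 1 - u 2 := by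
  simp only [cubicField, Matrix.cons_val_zero, Matrix.cons_val_one, Matrix.cons_val_two,
    Matrix.head_cons, Matrix.tail_cons]
  ring

lemma weighted_sum_le {u : Fin 3 → ℝ} (hu : ∀ i, 0 ≤ u i) :
    2 * cubicField u 0 + cubicField u 1 + cubicField u 2 ≤ 2 * (u 0 + u 1 + u 2 + 1) := by
  rw [weighted_sum_eq]
  linarith [hu 1, hu 2]

lemma diagonal_combination_eq (a t : ℝ) :
    a * cubicField (fun _ => t) 0 + a * cubicField (fun _ => t) 1 + cubicField (fun _ => t) 2
      = t ^ 3 - t := by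
  simp only [cubicField, Matrix.cons_val_zero, Matrix.cons_val_one, Matrix.cons_val_two,
    Matrix.head_cons, Matrix.tail_cons]
  ring

end cubicField

lemma exists_nonneg_linear_lt_cube_sub (L : ℝ) :
    ∃ t : ℝ, 0 ≤ t ∧ L * (3 * t + 1) < t ^ 3 - t := by
  refine ⟨|L| + 2, by positivity, ?_⟩
  have hL : L ≤ |L| := le_abs_self L
  have habs : 0 ≤ |L| := abs_nonneg L
  nlinarith [mul_nonneg habs habs, mul_nonneg (mul_nonneg habs habs) habs]

/-- There is a vector field (namely (1.5) of the paper) satisfying condition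
(V_{L1}) but not condition (V_L): the implication (V_L) ⇒ (V_{L1}) cannot be
reversed. -/
theorem stmt_9 : ∃ F : (Fin 3 → ℝ) → Fin 3 → ℝ,
    (∀ u : Fin 3 → ℝ, F u =
      ![u 0 - u 0 * u 1 * u 2, u 0 * u 1 * u 2 - u 1, u 0 * u 1 * u 2 - u 2]) ∧
    (∃ b₁ b₂ b₃ L₁ : ℝ, 0 < b₁ ∧ 0 < b₂ ∧ 0 < b₃ ∧ 0 ≤ L₁ ∧
      ∀ u : Fin 3 → ℝ, (∀ i, 0 ≤ u i) →
        b₁ * F u 0 + b₂ * F u 1 + b₃ * F u 2 ≤ L₁ * (u 0 + u 1 + u 2 + 1)) ∧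
    ¬ ∃ K : ℝ, 0 < K ∧ ∀ a₁ a₂ : ℝ, K ≤ a₁ → K ≤ a₂ →
        ∃ L : ℝ, 0 ≤ L ∧ ∀ u : Fin 3 → ℝ, (∀ i, 0 ≤ u i) →
          a₁ * F u 0 + a₂ * F u 1 + F u 2 ≤ L * (u 0 + u 1 + u 2 + 1) := by
  refine ⟨cubicField, fun u => rfl,
    ⟨2, 1, 1, 2, two_pos, one_pos, one_pos, zero_le_two, ?_⟩, ?_⟩
  · intro u hu
    simpa only [one_mul] using cubicField.weighted_sum_le hu
  · rintro ⟨K, -, hK⟩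
    obtain ⟨L, -, hL⟩ := hK K K le_rfl le_rfl
    obtain ⟨t, ht, hlt⟩ := exists_nonneg_linear_lt_cube_sub L
    have hdiag := hL (fun _ => t) fun _ => ht
    rw [cubicField.diagonal_combination_eq] at hdiag
    linarith
end
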